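/- arXiv:1605.02001 — 8 statements merged into one kernel-verified Lean document; each statement's English description precedes it below -/
import Mathlib

section
/- The complement {0,1,3,4} of point 2 in C(D̃₄) is a geometric hyperplane, and for every other geometric hyperplane H' distinct from {0,1,3,4}, the complement of the symmetric difference of {0,1,3,4} and H' is not a geometric hyperplane; i.e., {0,1,3,4} lies on no three-point Veldkamp line. -/
open Finset

/-- A geometric hyperplane of a graph (point-line structure with lines of size two):
a proper subset `H` of the points such that every line either lies fully in `H`
or meets `H` in exactly one point. -/
def IsHyp {n : ℕ} (E : Finset (Finset (Fin n))) (H : Finset (Fin n)) : Prop :=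
  H ≠ Finset.univ ∧ ∀ e ∈ E, e ⊆ H ∨ (e ∩ H).card = 1

/-- A three-point Veldkamp line: an unordered triple of distinct geometric hyperplanes
whose third member is the complement of the symmetric difference of the other two. -/
def IsVLine {n : ℕ} (E : Finset (Finset (Fin n))) (T : Finset (Finset (Fin n))) : Prop :=
  ∃ H1 H2 H3 : Finset (Fin n), IsHyp E H1 ∧ IsHyp E H2 ∧ IsHyp E H3 ∧
    H1 ≠ H2 ∧ H1 ≠ H3 ∧ H2 ≠ H3 ∧ H3 = (symmDiff H1 H2)ᶜ ∧ T = {H1, H2, H3}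
def edgesD4 : Finset (Finset (Fin 5)) := {{0,2},{1,2},{2,3},{2,4}}

instance {n : ℕ} (E : Finset (Finset (Fin n))) (H : Finset (Fin n)) : Decidable (IsHyp E H) :=
  decidable_of_iff (H ≠ Finset.univ ∧ ∀ e ∈ E, e ⊆ H ∨ (e ∩ H).card = 1) Iff.rfl

theorem stmt3 :
    IsHyp edgesD4 ({0,1,3,4} : Finset (Fin 5)) ∧
    ∀ H' : Finset (Fin 5), IsHyp edgesD4 H' → H' ≠ ({0,1,3,4} : Finset (Fin 5)) →
      ¬ IsHyp edgesD4 ((symmDiff ({0,1,3,4} : Finset (Fin 5)) H')ᶜ) := by decide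
end

section
/- The graph C(D̃₄) has exactly 35 Veldkamp lines of size three, i.e., exactly 35 unordered triples {H',H'',H'''} of distinct geometric hyperplanes such that H''' equals the complement of the symmetric difference of H' and H''. -/
open Finset

instance inst_s4 {n : ℕ} (E : Finset (Finset (Fin n))) (H : Finset (Fin n)) :
    Decidable (IsHyp E H) := by unfold IsHyp; infer_instance

def hypsD4 : Finset (Finset (Fin 5)) := Finset.univ.filter (fun H => IsHyp edgesD4 H)

def Psig (T : Finset (Finset (Fin 5))) : Prop :=
  ∃ H1 ∈ T, ∃ H2 ∈ T, ∃ H3 ∈ T,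
    H1 ≠ H2 ∧ H1 ≠ H3 ∧ H2 ≠ H3 ∧ H3 = (symmDiff H1 H2)ᶜ ∧ T = {H1, H2, H3}

instance (T : Finset (Finset (Fin 5))) : Decidable (Psig T) := by unfold Psig; infer_instance

def vlinesD4 : Finset (Finset (Finset (Fin 5))) :=
  (hypsD4.powersetCard 3).filter (fun T => Psig T)

lemma vline_iff (T : Finset (Finset (Fin 5))) : IsVLine edgesD4 T ↔ T ∈ vlinesD4 := by
  constructor
  · rintro ⟨H1, H2, H3, h1, h2, h3, n12, n13, n23, hsd, hT⟩
    have m1 : H1 ∈ hypsD4 := by simp [hypsD4, h1]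
    have m2 : H2 ∈ hypsD4 := by simp [hypsD4, h2]
    have m3 : H3 ∈ hypsD4 := by simp [hypsD4, h3]
    have hsub : T ⊆ hypsD4 := by
      subst hT
      intro x hx
      simp only [Finset.mem_insert, Finset.mem_singleton] at hx
      rcases hx with rfl | rfl | rfl <;> assumption
    have hcard : T.card = 3 := by
      subst hT
      rw [Finset.card_insert_of_notMem (by simp [n12, n13]),
        Finset.card_insert_of_notMem (by simp [n23]), Finset.card_singleton]
    refine Finset.mem_filter.mpr ⟨Finset.mem_powersetCard.mpr ⟨hsub, hcard⟩, ?_⟩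
    exact ⟨H1, by simp [hT], H2, by simp [hT], H3, by simp [hT],
      n12, n13, n23, hsd, hT⟩
  · intro hm
    obtain ⟨hpow, H1, m1, H2, m2, H3, m3, n12, n13, n23, hsd, hT⟩ :=
      Finset.mem_filter.mp hm
    have hsub := (Finset.mem_powersetCard.mp hpow).1
    have h1 : IsHyp edgesD4 H1 := (Finset.mem_filter.mp (hsub m1)).2
    have h2 : IsHyp edgesD4 H2 := (Finset.mem_filter.mp (hsub m2)).2
    have h3 : IsHyp edgesD4 H3 := (Finset.mem_filter.mp (hsub m3)).2
    exact ⟨H1, H2, H3, h1, h2, h3, n12, n13, n23, hsd, hT⟩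

set_option maxHeartbeats 4000000 in
theorem stmt4 : {T : Finset (Finset (Fin 5)) | IsVLine edgesD4 T}.ncard = 35 := by
  have h : {T : Finset (Finset (Fin 5)) | IsVLine edgesD4 T} = ↑vlinesD4 := by
    ext T; simpa using vline_iff T
  rw [h, Set.ncard_coe_finset]
  decide
end

section
/- The 15 geometric hyperplanes of C(D̃₄) other than {0,1,3,4}, together with the 35 three-point Veldkamp lines, form a point-line geometry isomorphic to the projective space PG(3,2): it has 15 points, 35 lines, 3 points per line, 7 lines per point, and any two distinct points lie on exactly one common line. -/
open Finset

/-- The point set: all geometric hyperplanes of `C(D̃₄)` except `{0,1,3,4}`. -/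
def Pts : Set (Finset (Fin 5)) :=
  {H | IsHyp edgesD4 H ∧ H ≠ ({0,1,3,4} : Finset (Fin 5))}

/-- The line set: the three-point Veldkamp lines of `C(D̃₄)`. -/
def Lns : Set (Finset (Finset (Fin 5))) := {T | IsVLine edgesD4 T}

open scoped symmDiff

/-!
Every edge of the star `C(D̃₄)` passes through the centre `2`, so its geometric hyperplanes are
the proper subsets containing `2` together with the set `{0,1,3,4}` of leaves. The third member
`(H' ∆ H'')ᶜ = H' ⇔ H''` of a Veldkamp line is the product of the elementary abelian `2`-group
`(Finset (Fin 5), ⇔)` with identity `univ`, and containing `2` is a character of this group.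
Hence a Veldkamp line cannot contain `{0,1,3,4}`, and the remaining hyperplanes are the
non-identity elements of a subgroup of order `16`, with lines `{a, b, a ⇔ b}`: this is `PG(3,2)`.
Two points `p ≠ q` lie only on `{p, q, p ⇔ q}`, and the numbers of lines through a point and of
lines follow by double counting.
-/

section DoubleCounting

variable {β : Type*} [DecidableEq β] {P : Finset β} {L : Finset (Finset β)} {k : ℕ}

theorem card_filter_mem_mul_of_unique_line (hL : ∀ T ∈ L, T ⊆ P ∧ #T = k)
    (huniq : ∀ p ∈ P, ∀ q ∈ P, p ≠ q → #{T ∈ L | p ∈ T ∧ q ∈ T} = 1)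
    {p : β} (hp : p ∈ P) : #{T ∈ L | p ∈ T} * (k - 1) = #P - 1 := by
  have key := card_mul_eq_card_mul (fun q T => q ∈ T) (s := P.erase p) (t := {T ∈ L | p ∈ T})
    (m := 1) (n := k - 1) ?above ?below
  · rwa [mul_one, card_erase_of_mem hp, eq_comm] at key
  case above =>
    intro q hq
    rw [bipartiteAbove, filter_filter]
    simpa only [and_comm (a := q ∈ _)] using
      huniq p hp q (mem_of_mem_erase hq) (ne_of_mem_erase hq).symm
  case below =>
    intro T hT
    obtain ⟨hTL, hpT⟩ := mem_filter.1 hT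
    have : bipartiteBelow (fun q T => q ∈ T) (P.erase p) T = T.erase p := by
      ext q
      simp only [mem_bipartiteBelow, mem_erase]
      exact ⟨fun ⟨⟨hqp, _⟩, hqT⟩ => ⟨hqp, hqT⟩, fun ⟨hqp, hqT⟩ => ⟨⟨hqp, (hL T hTL).1 hqT⟩, hqT⟩⟩
    rw [this, card_erase_of_mem hpT, (hL T hTL).2]

theorem card_mul_eq_card_mul_of_regular (hL : ∀ T ∈ L, T ⊆ P ∧ #T = k) {r : ℕ}
    (hr : ∀ p ∈ P, #{T ∈ L | p ∈ T} = r) : #L * k = #P * r :=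
  (card_mul_eq_card_mul (fun p T => p ∈ T) hr fun T hT => by
    rw [bipartiteBelow, filter_mem_eq_inter, inter_eq_right.2 (hL T hT).1, (hL T hT).2]).symm

end DoubleCounting

section BihimpLines

variable {α : Type*} [Fintype α] [DecidableEq α] {v : α} {a b : Finset α}

def properSubsetsContaining (v : α) : Finset (Finset α) := {H | v ∈ H ∧ H ≠ univ}

def bihimpLines (v : α) : Finset (Finset (Finset α)) :=
  (properSubsetsContaining v).offDiag.image fun ab => {ab.1, ab.2, ab.1 ⇔ ab.2}

theorem mem_properSubsetsContaining {H : Finset α} :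
    H ∈ properSubsetsContaining v ↔ v ∈ H ∧ H ≠ univ := by
  simp [properSubsetsContaining]

theorem bihimp_mem_properSubsetsContaining (ha : a ∈ properSubsetsContaining v)
    (hb : b ∈ properSubsetsContaining v) (hab : a ≠ b) : a ⇔ b ∈ properSubsetsContaining v := by
  rw [mem_properSubsetsContaining] at *
  refine ⟨mem_bihimp_iff.2 (iff_of_true ha.1 hb.1), fun h => hab ?_⟩
  rwa [← top_eq_univ, bihimp_eq_top] at h

theorem ne_bihimp_left (hb : b ∈ properSubsetsContaining v) : a ≠ a ⇔ b := fun h =>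
  (mem_properSubsetsContaining.1 hb).2 (bihimp_eq_left.1 h.symm)

theorem ne_bihimp_right (ha : a ∈ properSubsetsContaining v) : b ≠ a ⇔ b := fun h =>
  (mem_properSubsetsContaining.1 ha).2 (bihimp_eq_right.1 h.symm)

theorem mem_bihimpLines {T : Finset (Finset α)} :
    T ∈ bihimpLines v ↔ ∃ a ∈ properSubsetsContaining v, ∃ b ∈ properSubsetsContaining v,
      a ≠ b ∧ T = {a, b, a ⇔ b} := by
  simp only [bihimpLines, mem_image, mem_offDiag, Prod.exists]
  constructor
  · rintro ⟨a, b, ⟨ha, hb, hab⟩, rfl⟩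
    exact ⟨a, ha, b, hb, hab, rfl⟩
  · rintro ⟨a, ha, b, hb, hab, rfl⟩
    exact ⟨a, b, ⟨ha, hb, hab⟩, rfl⟩

theorem subset_and_card_eq_three_of_mem_bihimpLines {T : Finset (Finset α)}
    (hT : T ∈ bihimpLines v) : T ⊆ properSubsetsContaining v ∧ #T = 3 := by
  obtain ⟨a, ha, b, hb, hab, rfl⟩ := mem_bihimpLines.1 hT
  refine ⟨?_, card_eq_three.2 ⟨a, b, a ⇔ b, hab, ne_bihimp_left hb, ne_bihimp_right ha, rfl⟩⟩
  simp only [insert_subset_iff, singleton_subset_iff]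
  exact ⟨ha, hb, bihimp_mem_properSubsetsContaining ha hb hab⟩

theorem bihimp_mem_of_mem_bihimpLines {T : Finset (Finset α)} (hT : T ∈ bihimpLines v)
    {p q : Finset α} (hp : p ∈ T) (hq : q ∈ T) (hpq : p ≠ q) : p ⇔ q ∈ T := by
  obtain ⟨a, -, b, -, -, rfl⟩ := mem_bihimpLines.1 hT
  simp only [mem_insert, mem_singleton] at hp hq ⊢
  rcases hp with rfl | rfl | rfl <;> rcases hq with rfl | rfl | rfl <;>
    simp_all [bihimp_comm, bihimp_bihimp_cancel_left]

theorem eq_of_mem_bihimpLines {T : Finset (Finset α)} (hT : T ∈ bihimpLines v)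
    {p q : Finset α} (hp : p ∈ T) (hq : q ∈ T) (hpq : p ≠ q) : T = {p, q, p ⇔ q} := by
  have hP := (subset_and_card_eq_three_of_mem_bihimpLines hT).1
  have hline : {p, q, p ⇔ q} ∈ bihimpLines v := mem_bihimpLines.2 ⟨p, hP hp, q, hP hq, hpq, rfl⟩
  refine (eq_of_subset_of_card_le ?_ ?_).symm
  · simp only [insert_subset_iff, singleton_subset_iff]
    exact ⟨hp, hq, bihimp_mem_of_mem_bihimpLines hT hp hq hpq⟩
  · rw [(subset_and_card_eq_three_of_mem_bihimpLines hT).2,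
      (subset_and_card_eq_three_of_mem_bihimpLines hline).2]

theorem card_filter_bihimpLines_mem_mem {p q : Finset α} (hp : p ∈ properSubsetsContaining v)
    (hq : q ∈ properSubsetsContaining v) (hpq : p ≠ q) :
    #{T ∈ bihimpLines v | p ∈ T ∧ q ∈ T} = 1 := by
  refine card_eq_one.2 ⟨{p, q, p ⇔ q}, ext fun T => ?_⟩
  simp only [mem_filter, mem_singleton]
  constructor
  · rintro ⟨hT, hpT, hqT⟩
    exact eq_of_mem_bihimpLines hT hpT hqT hpq
  · rintro rfl
    exact ⟨mem_bihimpLines.2 ⟨p, hp, q, hq, hpq, rfl⟩, by simp, by simp⟩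

end BihimpLines

section Hyperplanes

variable {n : ℕ} {E : Finset (Finset (Fin n))} {v : Fin n} {L : Finset (Fin n)}

theorem mem_of_isHyp_bihimp (hE : ∀ H, IsHyp E H ↔ (v ∈ H ∧ H ≠ univ) ∨ H = L) (hvL : v ∉ L)
    {a b : Finset (Fin n)} (ha : IsHyp E a) (hb : IsHyp E b) (hc : IsHyp E (a ⇔ b))
    (hab : a ≠ b) (hac : a ≠ a ⇔ b) : v ∈ a := by
  by_contra hva
  have haL : a = L := ((hE a).1 ha).resolve_left fun h => hva h.1
  have hvb : v ∈ b := by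
    rcases (hE b).1 hb with h | rfl
    · exact h.1
    · exact absurd haL hab
  have hcL : a ⇔ b = L :=
    ((hE _).1 hc).resolve_left fun h => hva ((mem_bihimp_iff.1 h.1).2 hvb)
  exact hac (haL.trans hcL.symm)

theorem isVLine_iff_mem_bihimpLines (hE : ∀ H, IsHyp E H ↔ (v ∈ H ∧ H ≠ univ) ∨ H = L)
    (hvL : v ∉ L) {T : Finset (Finset (Fin n))} : IsVLine E T ↔ T ∈ bihimpLines v := by
  have mem_of_isHyp : ∀ {H}, IsHyp E H → v ∈ H → H ∈ properSubsetsContaining v :=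
    fun hH hvH =>
      mem_properSubsetsContaining.2 <| ((hE _).1 hH).resolve_right fun h => hvL (h ▸ hvH)
  have isHyp_of_mem : ∀ {H}, H ∈ properSubsetsContaining v → IsHyp E H := fun hH =>
    (hE _).2 (.inl (mem_properSubsetsContaining.1 hH))
  rw [mem_bihimpLines]
  constructor
  · rintro ⟨a, b, c, ha, hb, hc, hab, hac, hbc, rfl, rfl⟩
    rw [compl_symmDiff] at hc hac hbc ⊢
    have hva := mem_of_isHyp_bihimp hE hvL ha hb hc hab hac
    have hvb := mem_of_isHyp_bihimp hE hvL hb ha (bihimp_comm a b ▸ hc) hab.symm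
      (bihimp_comm a b ▸ hbc)
    exact ⟨a, mem_of_isHyp ha hva, b, mem_of_isHyp hb hvb, hab, rfl⟩
  · rintro ⟨a, ha, b, hb, hab, rfl⟩
    refine ⟨a, b, a ⇔ b, isHyp_of_mem ha, isHyp_of_mem hb,
      isHyp_of_mem (bihimp_mem_properSubsetsContaining ha hb hab), hab, ne_bihimp_left hb,
      ne_bihimp_right ha, compl_symmDiff a b |>.symm, rfl⟩

end Hyperplanes

theorem isHyp_edgesD4_iff (H : Finset (Fin 5)) :
    IsHyp edgesD4 H ↔ (2 ∈ H ∧ H ≠ univ) ∨ H = {0, 1, 3, 4} := by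
  unfold IsHyp; revert H; decide

theorem Pts_eq : Pts = ↑(properSubsetsContaining (2 : Fin 5)) := by
  ext H
  simp only [Pts, Set.mem_ofPred_eq, isHyp_edgesD4_iff, mem_coe, mem_properSubsetsContaining]
  constructor
  · rintro ⟨h | h, hne⟩
    exacts [h, absurd h hne]
  · rintro h
    exact ⟨.inl h, by rintro rfl; exact absurd h.1 (by decide)⟩

theorem Lns_eq : Lns = ↑(bihimpLines (2 : Fin 5)) :=
  Set.ext fun _ => isVLine_iff_mem_bihimpLines isHyp_edgesD4_iff (by decide)

theorem card_properSubsetsContaining_two : #(properSubsetsContaining (2 : Fin 5)) = 15 := by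
  decide

theorem stmt6 :
    Pts.ncard = 15 ∧ Lns.ncard = 35 ∧
    (∀ T ∈ Lns, T.card = 3 ∧ ∀ H ∈ T, H ∈ Pts) ∧
    (∀ H ∈ Pts, {T ∈ Lns | H ∈ T}.ncard = 7) ∧
    (∀ H1 ∈ Pts, ∀ H2 ∈ Pts, H1 ≠ H2 →
      {T ∈ Lns | H1 ∈ T ∧ H2 ∈ T}.ncard = 1) := by
  set P := properSubsetsContaining (2 : Fin 5)
  have hP : #P = 15 := card_properSubsetsContaining_two
  have hL : ∀ T ∈ bihimpLines 2, T ⊆ P ∧ #T = 3 := fun _ =>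
    subset_and_card_eq_three_of_mem_bihimpLines
  have huniq : ∀ p ∈ P, ∀ q ∈ P, p ≠ q → #{T ∈ bihimpLines 2 | p ∈ T ∧ q ∈ T} = 1 :=
    fun _ hp _ hq => card_filter_bihimpLines_mem_mem hp hq
  have hr : ∀ p ∈ P, #{T ∈ bihimpLines 2 | p ∈ T} = 7 := fun p hp => by
    have := card_filter_mem_mul_of_unique_line hL huniq hp
    omega
  have hb := card_mul_eq_card_mul_of_regular hL hr
  simp only [Pts_eq, Lns_eq, ← coe_filter, Set.ncard_coe_finset, mem_coe]
  exact ⟨hP, by omega, fun T hT => ⟨(hL T hT).2, fun _ hH => (hL T hT).1 hH⟩, hr, huniq⟩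
end

section
/- The graph C(D̃₅) with points {0,...,5} and lines {0,2},{1,2},{2,3},{3,4},{3,5} has exactly 23 geometric hyperplanes. -/
open Finset

def edgesD5 : Finset (Finset (Fin 6)) := {{0,2},{1,2},{2,3},{3,4},{3,5}}

/-! Since every line has two points, a line fails the hyperplane condition exactly when it misses
`H` altogether. Hence `H ↦ Hᶜ` identifies the geometric hyperplanes with the nonempty independent
sets of the graph, and the tree `D̃₅` has 23 of those. -/

def IsIndepSet {n : ℕ} (E : Finset (Finset (Fin n))) (S : Finset (Fin n)) : Prop :=
  ∀ e ∈ E, ¬e ⊆ S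

instance {n : ℕ} (E : Finset (Finset (Fin n))) : DecidablePred (IsIndepSet E) :=
  fun S => by unfold IsIndepSet; infer_instance

theorem subset_or_card_inter_eq_one_iff {α : Type*} [DecidableEq α] {e H : Finset α}
    (he : #e = 2) : e ⊆ H ∨ #(e ∩ H) = 1 ↔ (e ∩ H).Nonempty := by
  have hle : #(e ∩ H) ≤ 2 := he ▸ card_le_card inter_subset_left
  have hsub : e ⊆ H ↔ #(e ∩ H) = 2 := by
    rw [← inter_eq_left]
    exact ⟨fun h => by rw [h, he], fun h => eq_of_subset_of_card_le inter_subset_left (by omega)⟩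
  rw [hsub, ← card_pos]
  omega

section
variable {n : ℕ} {E : Finset (Finset (Fin n))}

theorem isHyp_iff_isIndepSet_compl (hE : ∀ e ∈ E, #e = 2) (H : Finset (Fin n)) :
    IsHyp E H ↔ Hᶜ.Nonempty ∧ IsIndepSet E Hᶜ := by
  unfold IsHyp IsIndepSet
  refine and_congr ?_ (forall₂_congr fun e he => ?_)
  · rw [nonempty_iff_ne_empty, ne_eq, ne_eq, compl_eq_empty_iff]
  · rw [subset_or_card_inter_eq_one_iff (hE e he), subset_compl_iff_disjoint_right,
      not_disjoint_iff_nonempty_inter]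

theorem ncard_setOf_isHyp (hE : ∀ e ∈ E, #e = 2) :
    {H | IsHyp E H}.ncard = #{S | S.Nonempty ∧ IsIndepSet E S} := by
  have h : {H | IsHyp E H} = compl '' ↑({S | S.Nonempty ∧ IsIndepSet E S} : Finset _) := by
    ext H
    simp only [Set.mem_compl_image, Set.mem_ofPred_eq, coe_filter, mem_univ, true_and,
      isHyp_iff_isIndepSet_compl hE]
  rw [h, Set.ncard_image_of_injective _ compl_injective, Set.ncard_coe_finset]

end

-- 16 independent sets avoid both 2 and 3, four contain 2 and four contain 3; one of these 24 is empty.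
theorem card_nonempty_isIndepSet_edgesD5 :
    #{S : Finset (Fin 6) | S.Nonempty ∧ IsIndepSet edgesD5 S} = 23 := by
  decide

theorem stmt7 : {H : Finset (Fin 6) | IsHyp edgesD5 H}.ncard = 23 := by
  rw [ncard_setOf_isHyp (by decide), card_nonempty_isIndepSet_edgesD5]
end

section
/- The graph C(D̃₆) with points {0,...,6} and lines {0,2},{1,2},{2,3},{3,4},{4,5},{4,6} has exactly 40 geometric hyperplanes. -/
open Finset

def edgesD6 : Finset (Finset (Fin 7)) := {{0,2},{1,2},{2,3},{3,4},{4,5},{4,6}}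

instance : DecidablePred (IsHyp edgesD6) := fun H => by unfold IsHyp; infer_instance

theorem stmt11 : {H : Finset (Fin 7) | IsHyp edgesD6 H}.ncard = 40 := by
  have h : {H : Finset (Fin 7) | IsHyp edgesD6 H} =
      ↑(Finset.univ.filter (fun H => IsHyp edgesD6 H)) := by
    ext H; simp
  rw [h, Set.ncard_coe_finset]
  set_option maxRecDepth 10000 in decide
end

section
/- In C(D̃₆), there is a unique smallest geometric hyperplane (with respect to inclusion among all minimal ones by cardinality), and it is contained in exactly 30 other geometric hyperplanes; these 31 hyperplanes carry exactly 155 three-point Veldkamp lines among themselves, matching the point and line counts of PG(4,2): 31 points and 155 lines. -/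
open Finset

set_option maxRecDepth 1000000
set_option maxHeartbeats 8000000

def hyps0 : Finset (Finset (Fin 7)) :=
  {{2,4},{0,2,4},{1,2,4},{0,1,2,4},{2,3,4},{0,2,3,4},{1,2,3,4},{0,1,2,3,4},{2,4,5},
   {0,2,4,5},{1,2,4,5},{0,1,2,4,5},{2,3,4,5},{0,2,3,4,5},{1,2,3,4,5},{0,1,2,3,4,5},
   {2,4,6},{0,2,4,6},{1,2,4,6},{0,1,2,4,6},{2,3,4,6},{0,2,3,4,6},{1,2,3,4,6},
   {0,1,2,3,4,6},{2,4,5,6},{0,2,4,5,6},{1,2,4,5,6},{0,1,2,4,5,6},{2,3,4,5,6},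
   {0,2,3,4,5,6},{1,2,3,4,5,6}}

theorem hyps0_eq : hyps0 =
    univ.filter (fun H : Finset (Fin 7) => IsHyp edgesD6 H ∧ ({2,4} : Finset (Fin 7)) ⊆ H) := by
  decide

def lines : Finset (Finset (Finset (Fin 7))) :=
  (hyps0.powersetCard 3).filter
    (fun T => T.val.foldr symmDiff ∅ = Finset.univ)

theorem lines_card : lines.card = 155 := by decide

theorem hyp_two_le : ∀ H : Finset (Fin 7), IsHyp edgesD6 H → 2 ≤ H.card := by decide

theorem hyp_min_unique : ∀ H : Finset (Fin 7), IsHyp edgesD6 H → H.card ≤ 2 →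
    H = ({2,4} : Finset (Fin 7)) := by decide

lemma key3 (a b c : Finset (Fin 7)) :
    symmDiff a (symmDiff b c) = Finset.univ ↔ c = (symmDiff a b)ᶜ := by
  simp only [Finset.ext_iff, Finset.mem_symmDiff, Finset.mem_compl, Finset.mem_univ]
  constructor <;> intro h x <;> have := h x <;> tauto

lemma foldr3 (a b c : Finset (Fin 7)) (hab : a ≠ b) (hac : a ≠ c) (hbc : b ≠ c) :
    ({a,b,c} : Finset (Finset (Fin 7))).val.foldr symmDiff ∅ =
      symmDiff a (symmDiff b c) := by
  have hv : ({a,b,c} : Finset (Finset (Fin 7))).val = a ::ₘ b ::ₘ {c} := by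
    rw [Finset.insert_val, Finset.insert_val, Finset.singleton_val,
      Multiset.ndinsert_of_notMem (by simp [hab, hac]),
      Multiset.ndinsert_of_notMem (by simp [hbc])]
  rw [hv]
  simp [Multiset.foldr_cons, ← Finset.bot_eq_empty, symmDiff_bot]

theorem stmt13 : ∃ H0 : Finset (Fin 7),
    (IsHyp edgesD6 H0 ∧ ∀ H : Finset (Fin 7), IsHyp edgesD6 H → H0.card ≤ H.card) ∧
    (∀ H0' : Finset (Fin 7),
      (IsHyp edgesD6 H0' ∧ ∀ H : Finset (Fin 7), IsHyp edgesD6 H → H0'.card ≤ H.card) →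
      H0' = H0) ∧
    {H : Finset (Fin 7) | IsHyp edgesD6 H ∧ H ≠ H0 ∧ H0 ⊆ H}.ncard = 30 ∧
    {T : Finset (Finset (Fin 7)) | IsVLine edgesD6 T ∧ ∀ H ∈ T, H0 ⊆ H}.ncard = 155 := by
  have hcard24 : ({2,4} : Finset (Fin 7)).card = 2 := by decide
  refine ⟨{2,4}, ⟨by decide, ?_⟩, ?_, ?_, ?_⟩
  · intro H hH
    rw [hcard24]
    exact hyp_two_le H hH
  · rintro H0' ⟨h1, h2⟩
    have hc : H0'.card ≤ 2 := le_trans (h2 ({2,4} : Finset (Fin 7)) (by decide)) (le_of_eq hcard24)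
    exact hyp_min_unique H0' h1 hc
  · have hset : {H : Finset (Fin 7) | IsHyp edgesD6 H ∧ H ≠ ({2,4} : Finset (Fin 7)) ∧
        ({2,4} : Finset (Fin 7)) ⊆ H} =
        ↑(univ.filter (fun H : Finset (Fin 7) => IsHyp edgesD6 H ∧ H ≠ ({2,4} : Finset (Fin 7)) ∧
        ({2,4} : Finset (Fin 7)) ⊆ H)) := by
      ext H; simp
    rw [hset, Set.ncard_coe_finset]
    decide
  · have hset : {T : Finset (Finset (Fin 7)) | IsVLine edgesD6 T ∧
        ∀ H ∈ T, ({2,4} : Finset (Fin 7)) ⊆ H} = ↑lines := by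
      ext T
      simp only [Set.mem_setOf_eq, mem_coe, lines, mem_filter, mem_powersetCard]
      constructor
      · rintro ⟨⟨H1, H2, H3, h1, h2, h3, n12, n13, n23, h3eq, rfl⟩, hall⟩
        have m1 : H1 ∈ hyps0 := by
          rw [hyps0_eq, mem_filter]; exact ⟨mem_univ _, h1, hall H1 (by simp)⟩
        have m2 : H2 ∈ hyps0 := by
          rw [hyps0_eq, mem_filter]; exact ⟨mem_univ _, h2, hall H2 (by simp)⟩
        have m3 : H3 ∈ hyps0 := by
          rw [hyps0_eq, mem_filter]; exact ⟨mem_univ _, h3, hall H3 (by simp)⟩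
        refine ⟨⟨?_, ?_⟩, ?_⟩
        · intro x hx
          simp only [mem_insert, mem_singleton] at hx
          rcases hx with rfl | rfl | rfl
          exacts [m1, m2, m3]
        · exact Finset.card_eq_three.mpr ⟨H1, H2, H3, n12, n13, n23, rfl⟩
        · rw [foldr3 H1 H2 H3 n12 n13 n23, key3]
          exact h3eq
      · rintro ⟨⟨hsub, hcard⟩, hfold⟩
        obtain ⟨a, b, c, nab, nac, nbc, rfl⟩ := Finset.card_eq_three.mp hcard
        rw [foldr3 a b c nab nac nbc, key3] at hfold
        have ma : a ∈ hyps0 := hsub (by simp)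
        have mb : b ∈ hyps0 := hsub (by simp)
        have mc : c ∈ hyps0 := hsub (by simp)
        rw [hyps0_eq, mem_filter] at ma mb mc
        refine ⟨⟨a, b, c, ma.2.1, mb.2.1, mc.2.1, nab, nac, nbc, hfold, rfl⟩, ?_⟩
        intro H hH
        simp only [mem_insert, mem_singleton] at hH
        rcases hH with rfl | rfl | rfl
        exacts [ma.2.2, mb.2.2, mc.2.2]
    rw [hset, Set.ncard_coe_finset]
    exact lines_card
end

section
/- The graph C(D̃₇) with points {0,...,7} and lines {0,2},{1,2},{2,3},{3,4},{4,5},{5,6},{5,7} has exactly 64 geometric hyperplanes. -/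
open Finset

def edgesD7 : Finset (Finset (Fin 8)) := {{0,2},{1,2},{2,3},{3,4},{4,5},{5,6},{5,7}}

instance : DecidablePred (IsHyp edgesD7) := fun H => by
  unfold IsHyp; infer_instance

theorem stmt14 : {H : Finset (Fin 8) | IsHyp edgesD7 H}.ncard = 64 := by
  have h : {H : Finset (Fin 8) | IsHyp edgesD7 H} = ↑(Finset.univ.filter (IsHyp edgesD7)) := by
    ext H; simp
  rw [h, Set.ncard_coe_finset]
  set_option maxRecDepth 10000 in decide
end

section
/- The graph C(D̃₇) (points {0,...,7}, lines {0,2},{1,2},{2,3},{3,4},{4,5},{5,6},{5,7}) has exactly 332 Veldkamp lines of size three. -/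
open Finset

set_option maxRecDepth 100000

/- Auxiliary: bitmask encoding of subsets of `Fin 8` as naturals below `2^8`. -/

instance instDecIsHyp {n : ℕ} (E : Finset (Finset (Fin n))) (H : Finset (Fin n)) :
    Decidable (IsHyp E H) := by unfold IsHyp; infer_instance

def decod (k : ℕ) : Finset (Fin 8) := Finset.univ.filter (fun i => k.testBit i.val)

def encod (s : Finset (Fin 8)) : ℕ := ∑ i ∈ s, 2 ^ (i : ℕ)

def hypB (k : ℕ) : Bool :=
  (decide (k ≠ 255)) && (k.testBit 0 || k.testBit 2) && (k.testBit 1 || k.testBit 2) &&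
  (k.testBit 2 || k.testBit 3) && (k.testBit 3 || k.testBit 4) && (k.testBit 4 || k.testBit 5) &&
  (k.testBit 5 || k.testBit 6) && (k.testBit 5 || k.testBit 7)

def thrd (a b : ℕ) : ℕ := 255 ^^^ (a ^^^ b)

def KH : Finset ℕ := (Finset.range 256).filter (fun k => hypB k)

def WN : Finset (ℕ × ℕ) :=
  (KH ×ˢ KH).filter (fun p => p.1 < p.2 ∧ p.2 < thrd p.1 p.2 ∧ hypB (thrd p.1 p.2))

def fmap (p : ℕ × ℕ) : Finset (Finset (Fin 8)) :=
  {decod p.1, decod p.2, decod (thrd p.1 p.2)}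

lemma mem_decod {k : ℕ} {i : Fin 8} : i ∈ decod k ↔ k.testBit i.val := by
  simp [decod]

lemma decod_inj {a b : ℕ} (ha : a < 2 ^ 8) (hb : b < 2 ^ 8) (h : decod a = decod b) :
    a = b := by
  apply Nat.eq_of_testBit_eq
  intro i
  by_cases hi : i < 8
  · have h2 : (⟨i, hi⟩ : Fin 8) ∈ decod a ↔ (⟨i, hi⟩ : Fin 8) ∈ decod b := by rw [h]
    simp only [mem_decod] at h2
    cases hA : a.testBit i <;> cases hB : b.testBit i <;> simp_all
  · rw [Nat.testBit_lt_two_pow (lt_of_lt_of_le ha (Nat.pow_le_pow_right (by norm_num) (le_of_not_gt hi))),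
      Nat.testBit_lt_two_pow (lt_of_lt_of_le hb (Nat.pow_le_pow_right (by norm_num) (le_of_not_gt hi)))]

lemma testBit_255 : ∀ i : Fin 8, Nat.testBit 255 i.val = true := by decide

lemma decod_thrd (a b : ℕ) : decod (thrd a b) = (symmDiff (decod a) (decod b))ᶜ := by
  ext i
  simp only [mem_decod, thrd, Nat.testBit_xor, Finset.mem_compl, Finset.mem_symmDiff,
    mem_decod, testBit_255 i]
  cases hA : a.testBit i.val <;> cases hB : b.testBit i.val <;> simp

lemma hyp_iff : ∀ k ∈ Finset.range 256, (IsHyp edgesD7 (decod k) ↔ hypB k = true) := by decide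

lemma encod_spec : ∀ H : Finset (Fin 8), encod H < 256 ∧ decod (encod H) = H := by decide

lemma xor_cancel (a b : ℕ) : a ^^^ (a ^^^ b) = b := by
  rw [← Nat.xor_assoc, Nat.xor_self, Nat.zero_xor]

lemma xor_helper {a b c : ℕ} : a ^^^ b ^^^ c = 255 ↔ c = 255 ^^^ (a ^^^ b) := by
  constructor
  · intro h
    have h2 : (a ^^^ b) ^^^ (a ^^^ b ^^^ c) = (a ^^^ b) ^^^ 255 := by rw [h]
    rw [xor_cancel] at h2
    rw [h2]; exact Nat.xor_comm _ _
  · rintro rfl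
    rw [Nat.xor_comm 255, xor_cancel]

lemma mem_KH {k : ℕ} : k ∈ KH ↔ k < 2 ^ 8 ∧ hypB k = true := by
  simp [KH, Finset.mem_range]

lemma mem_WN {p : ℕ × ℕ} : p ∈ WN ↔
    (p.1 ∈ KH ∧ p.2 ∈ KH) ∧ p.1 < p.2 ∧ p.2 < thrd p.1 p.2 ∧ hypB (thrd p.1 p.2) = true := by
  simp [WN, Finset.mem_filter, Finset.mem_product, and_assoc]

section Main

variable {T : Finset (Finset (Fin 8))}

private def Q (T : Finset (Finset (Fin 8))) (x y z : ℕ) : Prop :=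
  (x < 2 ^ 8 ∧ hypB x = true) ∧ (y < 2 ^ 8 ∧ hypB y = true) ∧ (z < 2 ^ 8 ∧ hypB z = true) ∧
    x ^^^ y ^^^ z = 255 ∧ T = {decod x, decod y, decod z}

private lemma Q_swap12 {x y z : ℕ} (h : Q T x y z) : Q T y x z := by
  obtain ⟨h1, h2, h3, h4, h5⟩ := h
  exact ⟨h2, h1, h3, by rw [Nat.xor_comm y x]; exact h4,
    by rw [h5]; exact Finset.insert_comm _ _ _⟩

private lemma Q_swap23 {x y z : ℕ} (h : Q T x y z) : Q T x z y := by
  obtain ⟨h1, h2, h3, h4, h5⟩ := h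
  refine ⟨h1, h3, h2, ?_, by rw [h5, Finset.pair_comm (decod y) (decod z)]⟩
  rw [Nat.xor_assoc, Nat.xor_comm z y, ← Nat.xor_assoc]; exact h4

private lemma Q_mem (x y z : ℕ) (hxy : x < y) (hyz : y < z) (h : Q T x y z) :
    T ∈ WN.image fmap := by
  obtain ⟨⟨hx1, hx2⟩, ⟨hy1, hy2⟩, ⟨hz1, hz2⟩, h4, h5⟩ := h
  have hz : z = thrd x y := xor_helper.mp h4
  refine Finset.mem_image.mpr ⟨(x, y), mem_WN.mpr ⟨⟨mem_KH.mpr ⟨hx1, hx2⟩, mem_KH.mpr ⟨hy1, hy2⟩⟩,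
    hxy, ?_, ?_⟩, ?_⟩
  · rw [← hz]; exact hyz
  · rw [← hz]; exact hz2
  · rw [h5]; unfold fmap; rw [← hz]

private lemma setEq : {T : Finset (Finset (Fin 8)) | IsVLine edgesD7 T} = ↑(WN.image fmap) := by
  ext T
  simp only [Set.mem_setOf_eq, Finset.mem_coe]
  constructor
  · rintro ⟨H1, H2, H3, h1, h2, h3, n12, n13, n23, hC, rfl⟩
    obtain ⟨ha1, ha2⟩ := encod_spec H1
    obtain ⟨hb1, hb2⟩ := encod_spec H2
    obtain ⟨hc1, hc2⟩ := encod_spec H3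
    set a := encod H1; set b := encod H2; set c := encod H3
    have ha1' : a < 2 ^ 8 := by norm_num; exact ha1
    have hb1' : b < 2 ^ 8 := by norm_num; exact hb1
    have hc1' : c < 2 ^ 8 := by norm_num; exact hc1
    have hya : hypB a = true := (hyp_iff a (Finset.mem_range.mpr ha1)).mp (by rw [ha2]; exact h1)
    have hyb : hypB b = true := (hyp_iff b (Finset.mem_range.mpr hb1)).mp (by rw [hb2]; exact h2)
    have hyc : hypB c = true := (hyp_iff c (Finset.mem_range.mpr hc1)).mp (by rw [hc2]; exact h3)
    have hthrd : thrd a b = c := by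
      apply decod_inj _ hc1'
      · rw [decod_thrd, ha2, hb2, hc2, hC]
      · exact Nat.xor_lt_two_pow (by norm_num) (Nat.xor_lt_two_pow ha1' hb1')
    have hxor : a ^^^ b ^^^ c = 255 := xor_helper.mpr hthrd.symm
    have hQ : Q {H1, H2, H3} a b c :=
      ⟨⟨ha1', hya⟩, ⟨hb1', hyb⟩, ⟨hc1', hyc⟩, hxor, by rw [ha2, hb2, hc2]⟩
    have nab : a ≠ b := fun h => n12 (by rw [← ha2, ← hb2, h])
    have nac : a ≠ c := fun h => n13 (by rw [← ha2, ← hc2, h])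
    have nbc : b ≠ c := fun h => n23 (by rw [← hb2, ← hc2, h])
    rcases lt_or_gt_of_ne nab with hab | hab <;> rcases lt_or_gt_of_ne nac with hac | hac <;>
      rcases lt_or_gt_of_ne nbc with hbc | hbc
    · exact Q_mem a b c hab hbc hQ
    · exact Q_mem a c b hac hbc (Q_swap23 hQ)
    · omega
    · exact Q_mem c a b hac hab (Q_swap12 (Q_swap23 hQ))
    · exact Q_mem b a c hab hac (Q_swap12 hQ)
    · omega
    · exact Q_mem b c a hbc hac (Q_swap23 (Q_swap12 hQ))
    · exact Q_mem c b a hbc hab (Q_swap23 (Q_swap12 (Q_swap23 hQ)))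
  · rintro hT
    obtain ⟨⟨x, y⟩, hmem, rfl⟩ := Finset.mem_image.mp hT
    obtain ⟨⟨hxK, hyK⟩, hxy, hyz, hz2⟩ := mem_WN.mp hmem
    obtain ⟨hx1, hx2⟩ := mem_KH.mp hxK
    obtain ⟨hy1, hy2⟩ := mem_KH.mp hyK
    set z := thrd x y with hzdef
    have hz1 : z < 2 ^ 8 := Nat.xor_lt_two_pow (by norm_num) (Nat.xor_lt_two_pow hx1 hy1)
    have hIsHyp : ∀ k, k < 2 ^ 8 → hypB k = true → IsHyp edgesD7 (decod k) := fun k h1 h2 =>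
      (hyp_iff k (Finset.mem_range.mpr (by norm_num at h1 ⊢; exact h1))).mpr h2
    refine ⟨decod x, decod y, decod z, hIsHyp x hx1 hx2, hIsHyp y hy1 hy2, hIsHyp z hz1 hz2,
      ?_, ?_, ?_, decod_thrd x y, rfl⟩
    · exact fun h => absurd (decod_inj hx1 hy1 h) (by omega)
    · exact fun h => absurd (decod_inj hx1 hz1 h) (by omega)
    · exact fun h => absurd (decod_inj hy1 hz1 h) (by omega)

private lemma injOn : Set.InjOn fmap ↑WN := by
  rintro ⟨x, y⟩ hp ⟨x', y'⟩ hq hfeq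
  simp only [Finset.mem_coe] at hp hq
  obtain ⟨⟨hxK, hyK⟩, hxy, hyz, -⟩ := mem_WN.mp hp
  obtain ⟨⟨hxK', hyK'⟩, hxy', hyz', -⟩ := mem_WN.mp hq
  obtain ⟨hx1, -⟩ := mem_KH.mp hxK
  obtain ⟨hy1, -⟩ := mem_KH.mp hyK
  obtain ⟨hx1', -⟩ := mem_KH.mp hxK'
  obtain ⟨hy1', -⟩ := mem_KH.mp hyK'
  set z := thrd x y with hzdef
  set z' := thrd x' y' with hzdef'
  have hz1 : z < 2 ^ 8 := Nat.xor_lt_two_pow (by norm_num) (Nat.xor_lt_two_pow hx1 hy1)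
  have hz1' : z' < 2 ^ 8 := Nat.xor_lt_two_pow (by norm_num) (Nat.xor_lt_two_pow hx1' hy1')
  unfold fmap at hfeq
  simp only at hfeq
  have conv : ∀ a a', a < 2 ^ 8 → a' < 2 ^ 8 → decod a = decod a' → a = a' := fun a a' h h' =>
    decod_inj h h'
  have mm : ∀ w, w < 2 ^ 8 → decod w ∈ ({decod x', decod y', decod z'} : Finset (Finset (Fin 8))) →
      w = x' ∨ w = y' ∨ w = z' := by
    intro w hw hmem
    rcases Finset.mem_insert.mp hmem with h | h
    · exact Or.inl (conv _ _ hw hx1' h)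
    rcases Finset.mem_insert.mp h with h | h
    · exact Or.inr (Or.inl (conv _ _ hw hy1' h))
    · exact Or.inr (Or.inr (conv _ _ hw hz1' (Finset.mem_singleton.mp h)))
  have mm' : ∀ w, w < 2 ^ 8 → decod w ∈ ({decod x, decod y, decod z} : Finset (Finset (Fin 8))) →
      w = x ∨ w = y ∨ w = z := by
    intro w hw hmem
    rcases Finset.mem_insert.mp hmem with h | h
    · exact Or.inl (conv _ _ hw hx1 h)
    rcases Finset.mem_insert.mp h with h | h
    · exact Or.inr (Or.inl (conv _ _ hw hy1 h))
    · exact Or.inr (Or.inr (conv _ _ hw hz1 (Finset.mem_singleton.mp h)))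
  have d1 : x = x' ∨ x = y' ∨ x = z' := mm x hx1 (hfeq ▸ Finset.mem_insert_self _ _)
  have d2 : y = x' ∨ y = y' ∨ y = z' := mm y hy1
    (hfeq ▸ Finset.mem_insert.mpr (Or.inr (Finset.mem_insert_self _ _)))
  have e1 : x' = x ∨ x' = y ∨ x' = z := mm' x' hx1' (hfeq ▸ Finset.mem_insert_self _ _)
  have e2 : y' = x ∨ y' = y ∨ y' = z := mm' y' hy1'
    (hfeq ▸ Finset.mem_insert.mpr (Or.inr (Finset.mem_insert_self _ _)))
  have : x = x' ∧ y = y' := by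
    rcases d1 with h|h|h <;> rcases e1 with g|g|g <;> rcases d2 with k|k|k <;>
      rcases e2 with l|l|l <;> omega
  exact Prod.ext this.1 this.2

end Main

set_option maxRecDepth 100000 in
private lemma WNcard : WN.card = 332 := by decide

theorem stmt15 : {T : Finset (Finset (Fin 8)) | IsVLine edgesD7 T}.ncard = 332 := by
  rw [setEq, Set.ncard_coe_finset, Finset.card_image_of_injOn injOn, WNcard]
end
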